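/- arXiv:2509.07565 — 5 statements merged into one kernel-verified Lean document; each statement's English description precedes it below -/
import Mathlib

section
/- If fL and fU are both differentiable at x₀ (in the classical sense), then the interval-valued function F(x) = [fL(x), fU(x)] is gH-differentiable at x₀ and its gH-derivative equals [min(fL′(x₀), fU′(x₀)), max(fL′(x₀), fU′(x₀))]; that is, min(γL(t), γU(t)) → min(fL′(x₀), fU′(x₀)) and max(γL(t), γU(t)) → max(fL′(x₀), fU′(x₀)) as t → 0 through t ≠ 0. -/
open Filter Topology

/-- The difference quotient `γ(t) = (f(x₀+t) − f(x₀))/t`. -/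
noncomputable def gamma (f : ℝ → ℝ) (x₀ : ℝ) (t : ℝ) : ℝ :=
  (f (x₀ + t) - f x₀) / t

/-- The interval-valued function `F(x) = [fL(x), fU(x)]` is gH-differentiable at `x₀` with
gH-derivative `[a,b]` (`a ≤ b`) if `min(γL(t), γU(t)) → a` and `max(γL(t), γU(t)) → b`
as `t → 0` through `t ≠ 0`. -/
def gHDifferentiableAt (fL fU : ℝ → ℝ) (x₀ a b : ℝ) : Prop :=
  a ≤ b ∧
  Tendsto (fun t => min (gamma fL x₀ t) (gamma fU x₀ t)) (𝓝[≠] (0 : ℝ)) (𝓝 a) ∧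
  Tendsto (fun t => max (gamma fL x₀ t) (gamma fU x₀ t)) (𝓝[≠] (0 : ℝ)) (𝓝 b)

/-- `γL, γU` are left complementary at `0` with values `{kL, kU}`, `kL < kU`:
the sets of left cluster values of `γL` and `γU` at `0` both equal `{kL, kU}`, and
`min(γL(t), γU(t)) → kL`, `max(γL(t), γU(t)) → kU` as `t → 0⁻`. -/
def LeftComplementary (γL γU : ℝ → ℝ) (kL kU : ℝ) : Prop :=
  kL < kU ∧
  {c : ℝ | MapClusterPt c (𝓝[<] (0 : ℝ)) γL} = {kL, kU} ∧
  {c : ℝ | MapClusterPt c (𝓝[<] (0 : ℝ)) γU} = {kL, kU} ∧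
  Tendsto (fun t => min (γL t) (γU t)) (𝓝[<] (0 : ℝ)) (𝓝 kL) ∧
  Tendsto (fun t => max (γL t) (γU t)) (𝓝[<] (0 : ℝ)) (𝓝 kU)

/-- `γL, γU` are right complementary at `0` with values `{kL, kU}`, `kL < kU`. -/
def RightComplementary (γL γU : ℝ → ℝ) (kL kU : ℝ) : Prop :=
  kL < kU ∧
  {c : ℝ | MapClusterPt c (𝓝[>] (0 : ℝ)) γL} = {kL, kU} ∧
  {c : ℝ | MapClusterPt c (𝓝[>] (0 : ℝ)) γU} = {kL, kU} ∧
  Tendsto (fun t => min (γL t) (γU t)) (𝓝[>] (0 : ℝ)) (𝓝 kL) ∧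
  Tendsto (fun t => max (γL t) (γU t)) (𝓝[>] (0 : ℝ)) (𝓝 kU)

theorem HasDerivAt.tendsto_gamma {f : ℝ → ℝ} {f' x₀ : ℝ} (hf : HasDerivAt f f' x₀) :
    Tendsto (gamma f x₀) (𝓝[≠] 0) (𝓝 f') :=
  hf.tendsto_slope_zero.congr fun t => by rw [gamma, smul_eq_mul, inv_mul_eq_div]

theorem gH_differentiable_of_endpoint_differentiable_general (fL fU : ℝ → ℝ) (x₀ dL dU : ℝ)
    (hL : HasDerivAt fL dL x₀) (hU : HasDerivAt fU dU x₀) :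
    gHDifferentiableAt fL fU x₀ (min dL dU) (max dL dU) :=
  ⟨min_le_max, hL.tendsto_gamma.min hU.tendsto_gamma, hL.tendsto_gamma.max hU.tendsto_gamma⟩

/-- If `fL` and `fU` are both differentiable at `x₀`, then `F(x) = [fL(x), fU(x)]` is
gH-differentiable at `x₀` with gH-derivative `[min(fL′(x₀), fU′(x₀)), max(fL′(x₀), fU′(x₀))]`. -/
theorem gH_differentiable_of_endpoint_differentiable (fL fU : ℝ → ℝ) (x₀ dL dU : ℝ)
    (hle : ∀ x, fL x ≤ fU x)
    (hL : HasDerivAt fL dL x₀) (hU : HasDerivAt fU dU x₀) :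
    gHDifferentiableAt fL fU x₀ (min dL dU) (max dL dU) :=
  gH_differentiable_of_endpoint_differentiable_general fL fU x₀ dL dU hL hU
end

section
/- Case (i) of the characterization of the gH-derivative: suppose the right-sided derivatives dL⁺ = lim_{t→0⁺} γL(t) and dU⁺ = lim_{t→0⁺} γU(t) and the left-sided derivatives dL⁻ = lim_{t→0⁻} γL(t) and dU⁻ = lim_{t→0⁻} γU(t) all exist, and that min(dL⁺, dU⁺) = min(dL⁻, dU⁻) and max(dL⁺, dU⁺) = max(dL⁻, dU⁻). Then the interval-valued function F(x) = [fL(x), fU(x)] is gH-differentiable at x₀ with gH-derivative [min(dL⁺, dU⁺), max(dL⁺, dU⁺)]. -/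
open Filter Topology

theorem tendsto_nhdsNE_of_nhdsLT_of_nhdsGT {α β : Type*} [TopologicalSpace α] [LinearOrder α]
    {f : α → β} {a : α} {l : Filter β} (hlt : Tendsto f (𝓝[<] a) l)
    (hgt : Tendsto f (𝓝[>] a) l) : Tendsto f (𝓝[≠] a) l :=
  nhdsLT_sup_nhdsGT a ▸ hlt.sup hgt

theorem gH_differentiable_case_i_general (fL fU : ℝ → ℝ) (x₀ dLp dUp dLm dUm : ℝ)
    (hLp : Tendsto (gamma fL x₀) (𝓝[>] (0 : ℝ)) (𝓝 dLp))
    (hUp : Tendsto (gamma fU x₀) (𝓝[>] (0 : ℝ)) (𝓝 dUp))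
    (hLm : Tendsto (gamma fL x₀) (𝓝[<] (0 : ℝ)) (𝓝 dLm))
    (hUm : Tendsto (gamma fU x₀) (𝓝[<] (0 : ℝ)) (𝓝 dUm))
    (hmin : min dLp dUp = min dLm dUm)
    (hmax : max dLp dUp = max dLm dUm) :
    gHDifferentiableAt fL fU x₀ (min dLp dUp) (max dLp dUp) := by
  refine ⟨min_le_max, ?_, ?_⟩
  · exact tendsto_nhdsNE_of_nhdsLT_of_nhdsGT (hmin ▸ hLm.min hUm) (hLp.min hUp)
  · exact tendsto_nhdsNE_of_nhdsLT_of_nhdsGT (hmax ▸ hLm.max hUm) (hLp.max hUp)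

/-- Case (i) of the characterization of the gH-derivative: if all four one-sided derivatives
of the endpoint functions exist and the min's and max's from the right and the left agree,
then `F` is gH-differentiable at `x₀` with gH-derivative `[min(dL⁺, dU⁺), max(dL⁺, dU⁺)]`. -/
theorem gH_differentiable_case_i (fL fU : ℝ → ℝ) (x₀ dLp dUp dLm dUm : ℝ)
    (hle : ∀ x, fL x ≤ fU x)
    (hLp : Tendsto (gamma fL x₀) (𝓝[>] (0 : ℝ)) (𝓝 dLp))
    (hUp : Tendsto (gamma fU x₀) (𝓝[>] (0 : ℝ)) (𝓝 dUp))
    (hLm : Tendsto (gamma fL x₀) (𝓝[<] (0 : ℝ)) (𝓝 dLm))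
    (hUm : Tendsto (gamma fU x₀) (𝓝[<] (0 : ℝ)) (𝓝 dUm))
    (hmin : min dLp dUp = min dLm dUm)
    (hmax : max dLp dUp = max dLm dUm) :
    gHDifferentiableAt fL fU x₀ (min dLp dUp) (max dLp dUp) :=
  gH_differentiable_case_i_general fL fU x₀ dLp dUp dLm dUm hLp hUp hLm hUm hmin hmax
end

section
/- Complete characterization of gH-differentiability (Theorem 3.1): the interval-valued function F(x) = [fL(x), fU(x)] is gH-differentiable at x₀ (i.e., there exist reals a ≤ b with min(γL(t), γU(t)) → a and max(γL(t), γU(t)) → b as t → 0 through t ≠ 0) if and only if at least one of the following holds: (i) the one-sided derivatives dL⁺, dU⁺ (from the right) and dL⁻, dU⁻ (from the left) of fL and fU at x₀ all exist with min(dL⁺, dU⁺) = min(dL⁻, dU⁻) and max(dL⁺, dU⁺) = max(dL⁻, dU⁻); (ii) dL⁺ and dU⁺ exist and there are reals kL < kU such that γL, γU are left complementary at 0 with values {kL, kU} and min(dL⁺, dU⁺) = kL, max(dL⁺, dU⁺) = kU; (iii) dL⁻ and dU⁻ exist and there are reals kL < kU such that γL, γU are right complementary at 0 with values {kL, kU}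 and min(dL⁻, dU⁻) = kL, max(dL⁻, dU⁻) = kU; (iv) there are reals kL < kU such that γL, γU are both left complementary and right complementary at 0 with values {kL, kU}. -/
open Filter Topology

/-!
On each side of `0`, split the punctured half-neighbourhood according to whether `γL ≤ γU`.
Where `γL ≤ γU`, the quotient `γL` follows `min(γL, γU)` and `γU` follows `max(γL, γU)`; on the
complement the roles are swapped. If one of the two parts is negligible, both quotients converge
on that side; otherwise each of them has exactly the two cluster values `a` and `b`, which is
complementarity. The four combinations over the two sides give (i)–(iv), and conversely
`𝓝[≠] 0 = 𝓝[<] 0 ⊔ 𝓝[>] 0` glues one-sided limits of `min` and `max` into gH-differentiability.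
-/

theorem Filter.inf_principal_sup_inf_principal_compl {α : Type*} (l : Filter α) (s : Set α) :
    l ⊓ 𝓟 s ⊔ l ⊓ 𝓟 sᶜ = l := by
  rw [← inf_sup_left, sup_principal, Set.union_compl_self, principal_univ, inf_top_eq]

section MinMax

variable {α β : Type*} [TopologicalSpace β] {f g : α → β} {l : Filter α} {a b : β}

theorem setOf_mapClusterPt_sup_eq_pair [T2Space β] {l₁ l₂ : Filter α} [l₁.NeBot] [l₂.NeBot]
    (h₁ : Tendsto f l₁ (𝓝 a)) (h₂ : Tendsto f l₂ (𝓝 b)) :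
    {c | MapClusterPt c (l₁ ⊔ l₂) f} = {a, b} := by
  ext c
  simp only [Set.mem_ofPred_eq, Set.mem_insert_iff, Set.mem_singleton_iff, MapClusterPt,
    Filter.map_sup, clusterPt_sup]
  constructor
  · rintro (hc | hc)
    exacts [.inl (eq_of_nhds_neBot (hc.mono h₁)), .inr (eq_of_nhds_neBot (hc.mono h₂))]
  · rintro (rfl | rfl)
    exacts [.inl h₁.mapClusterPt, .inr h₂.mapClusterPt]

variable [LinearOrder β]

theorem exists_tendsto_or_setOf_mapClusterPt_eq_pair [T2Space β] (hab : a ≤ b)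
    (hmin : Tendsto (fun t => min (f t) (g t)) l (𝓝 a))
    (hmax : Tendsto (fun t => max (f t) (g t)) l (𝓝 b)) :
    (∃ c d, Tendsto f l (𝓝 c) ∧ Tendsto g l (𝓝 d) ∧ min c d = a ∧ max c d = b) ∨
      ({c | MapClusterPt c l f} = {a, b} ∧ {c | MapClusterPt c l g} = {a, b}) := by
  set S := {t | f t ≤ g t}
  have hle : ∀ᶠ t in l ⊓ 𝓟 S, f t ≤ g t := eventually_inf_principal.2 (.of_forall fun _ => id)
  have hgt : ∀ᶠ t in l ⊓ 𝓟 Sᶜ, g t < f t :=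
    eventually_inf_principal.2 (.of_forall fun _ h => not_le.1 h)
  have hfa : Tendsto f (l ⊓ 𝓟 S) (𝓝 a) :=
    (hmin.mono_left inf_le_left).congr' (hle.mono fun _ h => min_eq_left h)
  have hgb : Tendsto g (l ⊓ 𝓟 S) (𝓝 b) :=
    (hmax.mono_left inf_le_left).congr' (hle.mono fun _ h => max_eq_right h)
  have hfb : Tendsto f (l ⊓ 𝓟 Sᶜ) (𝓝 b) :=
    (hmax.mono_left inf_le_left).congr' (hgt.mono fun _ h => max_eq_left h.le)
  have hga : Tendsto g (l ⊓ 𝓟 Sᶜ) (𝓝 a) :=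
    (hmin.mono_left inf_le_left).congr' (hgt.mono fun _ h => min_eq_right h.le)
  have hl := l.inf_principal_sup_inf_principal_compl S
  rcases (l ⊓ 𝓟 Sᶜ).eq_or_neBot with hbot | _
  · rw [hbot, sup_bot_eq] at hl
    exact .inl ⟨a, b, hl ▸ hfa, hl ▸ hgb, min_eq_left hab, max_eq_right hab⟩
  rcases (l ⊓ 𝓟 S).eq_or_neBot with hbot | _
  · rw [hbot, bot_sup_eq] at hl
    exact .inl ⟨b, a, hl ▸ hfb, hl ▸ hga, min_eq_right hab, max_eq_left hab⟩
  rw [← hl]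
  exact .inr ⟨setOf_mapClusterPt_sup_eq_pair hfa hfb,
    Set.pair_comm a b ▸ setOf_mapClusterPt_sup_eq_pair hgb hga⟩

theorem tendsto_of_tendsto_min_of_tendsto_max [OrderTopology β]
    (hmin : Tendsto (fun t => min (f t) (g t)) l (𝓝 a))
    (hmax : Tendsto (fun t => max (f t) (g t)) l (𝓝 a)) :
    Tendsto f l (𝓝 a) ∧ Tendsto g l (𝓝 a) :=
  ⟨tendsto_of_tendsto_of_tendsto_of_le_of_le hmin hmax (fun _ => min_le_left _ _)
      (fun _ => le_max_left _ _),
    tendsto_of_tendsto_of_tendsto_of_le_of_le hmin hmax (fun _ => min_le_right _ _)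
      (fun _ => le_max_right _ _)⟩

end MinMax

theorem gHDifferentiableAt_iff {fL fU : ℝ → ℝ} {x₀ a b : ℝ} :
    gHDifferentiableAt fL fU x₀ a b ↔ a ≤ b ∧
      (Tendsto (fun t => min (gamma fL x₀ t) (gamma fU x₀ t)) (𝓝[<] 0) (𝓝 a) ∧
        Tendsto (fun t => max (gamma fL x₀ t) (gamma fU x₀ t)) (𝓝[<] 0) (𝓝 b)) ∧
      (Tendsto (fun t => min (gamma fL x₀ t) (gamma fU x₀ t)) (𝓝[>] 0) (𝓝 a) ∧
        Tendsto (fun t => max (gamma fL x₀ t) (gamma fU x₀ t)) (𝓝[>] 0) (𝓝 b)) := by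
  simp only [gHDifferentiableAt, ← nhdsLT_sup_nhdsGT, tendsto_sup]
  tauto

theorem gH_differentiable_characterization_general (fL fU : ℝ → ℝ) (x₀ : ℝ) :
    (∃ a b : ℝ, gHDifferentiableAt fL fU x₀ a b) ↔
    ((∃ dLp dUp dLm dUm : ℝ,
        Tendsto (gamma fL x₀) (𝓝[>] (0 : ℝ)) (𝓝 dLp) ∧
        Tendsto (gamma fU x₀) (𝓝[>] (0 : ℝ)) (𝓝 dUp) ∧
        Tendsto (gamma fL x₀) (𝓝[<] (0 : ℝ)) (𝓝 dLm) ∧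
        Tendsto (gamma fU x₀) (𝓝[<] (0 : ℝ)) (𝓝 dUm) ∧
        min dLp dUp = min dLm dUm ∧ max dLp dUp = max dLm dUm) ∨
     (∃ dLp dUp kL kU : ℝ,
        Tendsto (gamma fL x₀) (𝓝[>] (0 : ℝ)) (𝓝 dLp) ∧
        Tendsto (gamma fU x₀) (𝓝[>] (0 : ℝ)) (𝓝 dUp) ∧
        LeftComplementary (gamma fL x₀) (gamma fU x₀) kL kU ∧
        min dLp dUp = kL ∧ max dLp dUp = kU) ∨
     (∃ dLm dUm kL kU : ℝ,
        Tendsto (gamma fL x₀) (𝓝[<] (0 : ℝ)) (𝓝 dLm) ∧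
        Tendsto (gamma fU x₀) (𝓝[<] (0 : ℝ)) (𝓝 dUm) ∧
        RightComplementary (gamma fL x₀) (gamma fU x₀) kL kU ∧
        min dLm dUm = kL ∧ max dLm dUm = kU) ∨
     (∃ kL kU : ℝ,
        LeftComplementary (gamma fL x₀) (gamma fU x₀) kL kU ∧
        RightComplementary (gamma fL x₀) (gamma fU x₀) kL kU)) := by
  constructor
  · rintro ⟨a, b, hgH⟩
    obtain ⟨hab, ⟨hminl, hmaxl⟩, hminr, hmaxr⟩ := gHDifferentiableAt_iff.1 hgH
    rcases hab.eq_or_lt with rfl | hab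
    · obtain ⟨hLl, hUl⟩ := tendsto_of_tendsto_min_of_tendsto_max hminl hmaxl
      obtain ⟨hLr, hUr⟩ := tendsto_of_tendsto_min_of_tendsto_max hminr hmaxr
      exact .inl ⟨a, a, a, a, hLr, hUr, hLl, hUl, rfl, rfl⟩
    rcases exists_tendsto_or_setOf_mapClusterPt_eq_pair hab.le hminl hmaxl with
      ⟨cl, dl, hLl, hUl, hcdl, hcdl'⟩ | ⟨hclLl, hclUl⟩ <;>
    rcases exists_tendsto_or_setOf_mapClusterPt_eq_pair hab.le hminr hmaxr with
      ⟨cr, dr, hLr, hUr, hcdr, hcdr'⟩ | ⟨hclLr, hclUr⟩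
    · exact .inl ⟨cr, dr, cl, dl, hLr, hUr, hLl, hUl, hcdr.trans hcdl.symm,
        hcdr'.trans hcdl'.symm⟩
    · exact .inr <| .inr <| .inl
        ⟨cl, dl, a, b, hLl, hUl, ⟨hab, hclLr, hclUr, hminr, hmaxr⟩, hcdl, hcdl'⟩
    · exact .inr <| .inl
        ⟨cr, dr, a, b, hLr, hUr, ⟨hab, hclLl, hclUl, hminl, hmaxl⟩, hcdr, hcdr'⟩
    · exact .inr <| .inr <| .inr
        ⟨a, b, ⟨hab, hclLl, hclUl, hminl, hmaxl⟩, hab, hclLr, hclUr, hminr, hmaxr⟩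
  · rintro (⟨dLp, dUp, dLm, dUm, hLr, hUr, hLl, hUl, hmin, hmax⟩ |
      ⟨dLp, dUp, kL, kU, hLr, hUr, ⟨hk, -, -, hminl, hmaxl⟩, rfl, rfl⟩ |
      ⟨dLm, dUm, kL, kU, hLl, hUl, ⟨hk, -, -, hminr, hmaxr⟩, rfl, rfl⟩ |
      ⟨kL, kU, ⟨hk, -, -, hminl, hmaxl⟩, -, -, -, hminr, hmaxr⟩)
    · refine ⟨min dLp dUp, max dLp dUp, gHDifferentiableAt_iff.2 ⟨min_le_max, ?_, ?_⟩⟩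
      · rw [hmin, hmax]; exact ⟨hLl.min hUl, hLl.max hUl⟩
      · exact ⟨hLr.min hUr, hLr.max hUr⟩
    · exact ⟨_, _, gHDifferentiableAt_iff.2 ⟨hk.le, ⟨hminl, hmaxl⟩, hLr.min hUr, hLr.max hUr⟩⟩
    · exact ⟨_, _, gHDifferentiableAt_iff.2 ⟨hk.le, ⟨hLl.min hUl, hLl.max hUl⟩, hminr, hmaxr⟩⟩
    · exact ⟨kL, kU, gHDifferentiableAt_iff.2 ⟨hk.le, ⟨hminl, hmaxl⟩, hminr, hmaxr⟩⟩

/-- Complete characterization of gH-differentiability (Theorem 3.1): `F(x) = [fL(x), fU(x)]`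
is gH-differentiable at `x₀` iff one of the cases (i)–(iv) holds. -/
theorem gH_differentiable_characterization (fL fU : ℝ → ℝ) (x₀ : ℝ)
    (hle : ∀ x, fL x ≤ fU x) :
    (∃ a b : ℝ, gHDifferentiableAt fL fU x₀ a b) ↔
    ((∃ dLp dUp dLm dUm : ℝ,
        Tendsto (gamma fL x₀) (𝓝[>] (0 : ℝ)) (𝓝 dLp) ∧
        Tendsto (gamma fU x₀) (𝓝[>] (0 : ℝ)) (𝓝 dUp) ∧
        Tendsto (gamma fL x₀) (𝓝[<] (0 : ℝ)) (𝓝 dLm) ∧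
        Tendsto (gamma fU x₀) (𝓝[<] (0 : ℝ)) (𝓝 dUm) ∧
        min dLp dUp = min dLm dUm ∧ max dLp dUp = max dLm dUm) ∨
     (∃ dLp dUp kL kU : ℝ,
        Tendsto (gamma fL x₀) (𝓝[>] (0 : ℝ)) (𝓝 dLp) ∧
        Tendsto (gamma fU x₀) (𝓝[>] (0 : ℝ)) (𝓝 dUp) ∧
        LeftComplementary (gamma fL x₀) (gamma fU x₀) kL kU ∧
        min dLp dUp = kL ∧ max dLp dUp = kU) ∨
     (∃ dLm dUm kL kU : ℝ,
        Tendsto (gamma fL x₀) (𝓝[<] (0 : ℝ)) (𝓝 dLm) ∧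
        Tendsto (gamma fU x₀) (𝓝[<] (0 : ℝ)) (𝓝 dUm) ∧
        RightComplementary (gamma fL x₀) (gamma fU x₀) kL kU ∧
        min dLm dUm = kL ∧ max dLm dUm = kU) ∨
     (∃ kL kU : ℝ,
        LeftComplementary (gamma fL x₀) (gamma fU x₀) kL kU ∧
        RightComplementary (gamma fL x₀) (gamma fU x₀) kL kU)) :=
  gH_differentiable_characterization_general fL fU x₀
end

section
/- Define fL : ℝ → ℝ by fL(x) = x for x > 0, fL(0) = 0, fL(x) = x for x < 0 rational, and fL(x) = 2x for x < 0 irrational; define fU : ℝ → ℝ by fU(x) = 2x for x > 0, fU(0) = 0, fU(x) = x for x < 0 rational, and fU(x) = 2x for x < 0 irrational. Then fL ≤ fU pointwise, the right-sided derivatives of fL and fU at 0 exist (equal to 1 and 2), but γL and γU are not left complementary at 0 (since min(γL(t), γU(t)) = max(γL(t), γU(t)) for t < 0 and this common value has both 1 and 2 as left cluster values), and the interval-valued function F(x) = [fL(x), fU(x)] is NOT gH-differentiable at 0: there exist no reals a ≤ b with min(γL(t), γU(t)) → a and max(γL(t), γU(t)) → b as t → 0 through t ≠ 0. -/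
/-!
For `t < 0` both difference quotients at `0` equal `1` at rational `t` and `2` at irrational `t`.
Both kinds of points accumulate at `0` from the left, so `min (γL t) (γU t)` has the two left
cluster values `1` and `2` and has no limit as `t → 0⁻`; but left complementarity demands such a
limit, and so does gH-differentiability, whose limits through `t ≠ 0` include the left one.
-/

open Filter Topology

open Classical in
/-- `fL(x) = x` for `x > 0`, `fL(0) = 0`, `fL(x) = x` for `x < 0` rational,
`fL(x) = 2x` for `x < 0` irrational. -/
noncomputable def fL10 : ℝ → ℝ := fun x =>
  if 0 < x then x else if x = 0 then 0 else if Irrational x then 2 * x else x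

open Classical in
/-- `fU(x) = 2x` for `x > 0`, `fU(0) = 0`, `fU(x) = x` for `x < 0` rational,
`fU(x) = 2x` for `x < 0` irrational. -/
noncomputable def fU10 : ℝ → ℝ := fun x =>
  if 0 < x then 2 * x else if x = 0 then 0 else if Irrational x then 2 * x else x

theorem MapClusterPt.eq_of_tendsto {α X : Type*} [TopologicalSpace X] [T2Space X]
    {F : Filter α} {u : α → X} {x y : X} (hx : MapClusterPt x F u) (hu : Tendsto u F (𝓝 y)) :
    x = y :=
  eq_of_nhds_neBot (hx.clusterPt.mono hu)

theorem mapClusterPt_of_frequently_eq {α X : Type*} [TopologicalSpace X]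
    {F : Filter α} {u : α → X} {x : X} (h : ∃ᶠ a in F, u a = x) : MapClusterPt x F u :=
  mapClusterPt_iff_frequently.2 fun _ hs => h.mono fun _ ha => ha ▸ mem_of_mem_nhds hs

theorem Dense.frequently_nhdsLT {α : Type*} [TopologicalSpace α] [LinearOrder α]
    [OrderTopology α] [DenselyOrdered α] [NoMinOrder α] {s : Set α} (hs : Dense s) (x : α) :
    ∃ᶠ y in 𝓝[<] x, y ∈ s := by
  refine frequently_iff.2 fun hU => ?_
  obtain ⟨l, hl, hsub⟩ := mem_nhdsLT_iff_exists_Ioo_subset.1 hU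
  obtain ⟨y, hys, hy⟩ := hs.exists_between hl
  exact ⟨y, hsub hy, hys⟩

theorem frequently_irrational_nhdsLT (x : ℝ) : ∃ᶠ y in 𝓝[<] x, Irrational y :=
  dense_irrational.frequently_nhdsLT x

theorem frequently_not_irrational_nhdsLT (x : ℝ) : ∃ᶠ y in 𝓝[<] x, ¬ Irrational y :=
  (Rat.denseRange_cast.frequently_nhdsLT x).mono fun _ hy => not_not.2 hy

theorem gamma_zero_of_eq_mul {f : ℝ → ℝ} {c t : ℝ} (h0 : f 0 = 0) (ht : t ≠ 0)
    (hf : f t = c * t) : gamma f 0 t = c := by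
  rw [gamma, zero_add, h0, hf, sub_zero, mul_div_assoc, div_self ht, mul_one]

theorem gamma_zero_of_eq_self {f : ℝ → ℝ} {t : ℝ} (h0 : f 0 = 0) (ht : t ≠ 0)
    (hf : f t = t) : gamma f 0 t = 1 :=
  gamma_zero_of_eq_mul h0 ht (hf.trans (one_mul t).symm)

theorem fL10_zero : fL10 0 = 0 := by simp [fL10]

theorem fU10_zero : fU10 0 = 0 := by simp [fU10]

theorem fL10_of_pos {x : ℝ} (hx : 0 < x) : fL10 x = x := by simp [fL10, hx]

theorem fU10_of_pos {x : ℝ} (hx : 0 < x) : fU10 x = 2 * x := by simp [fU10, hx]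

theorem fL10_eq_fU10_of_nonpos {x : ℝ} (hx : x ≤ 0) : fL10 x = fU10 x := by
  simp [fL10, fU10, not_lt.2 hx]

theorem fU10_of_neg_of_irrational {x : ℝ} (hx : x < 0) (hirr : Irrational x) :
    fU10 x = 2 * x := by
  simp [fU10, not_lt.2 hx.le, hx.ne, hirr]

theorem fU10_of_neg_of_not_irrational {x : ℝ} (hx : x < 0) (hrat : ¬ Irrational x) :
    fU10 x = x := by
  simp [fU10, not_lt.2 hx.le, hx.ne, hrat]

theorem fL10_le_fU10 (x : ℝ) : fL10 x ≤ fU10 x := by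
  rcases le_or_gt x 0 with hx | hx
  · exact (fL10_eq_fU10_of_nonpos hx).le
  · rw [fL10_of_pos hx, fU10_of_pos hx]
    linarith

theorem tendsto_gamma_fL10_nhdsGT : Tendsto (gamma fL10 0) (𝓝[>] 0) (𝓝 1) :=
  tendsto_const_nhds.congr' <| eventually_nhdsWithin_of_forall fun _ ht =>
    (gamma_zero_of_eq_self fL10_zero (ne_of_gt ht) (fL10_of_pos ht)).symm

theorem tendsto_gamma_fU10_nhdsGT : Tendsto (gamma fU10 0) (𝓝[>] 0) (𝓝 2) :=
  tendsto_const_nhds.congr' <| eventually_nhdsWithin_of_forall fun _ ht =>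
    (gamma_zero_of_eq_mul fU10_zero (ne_of_gt ht) (fU10_of_pos ht)).symm

theorem gamma_fL10_eq_gamma_fU10_of_neg {t : ℝ} (ht : t < 0) :
    gamma fL10 0 t = gamma fU10 0 t := by
  rw [gamma, gamma, zero_add, fL10_eq_fU10_of_nonpos ht.le, fL10_eq_fU10_of_nonpos le_rfl]

theorem min_gamma_fL10_fU10_of_neg {t : ℝ} (ht : t < 0) :
    min (gamma fL10 0 t) (gamma fU10 0 t) = gamma fU10 0 t := by
  rw [gamma_fL10_eq_gamma_fU10_of_neg ht, min_self]

theorem mapClusterPt_one_min_gamma_nhdsLT :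
    MapClusterPt 1 (𝓝[<] 0) (fun t => min (gamma fL10 0 t) (gamma fU10 0 t)) := by
  refine mapClusterPt_of_frequently_eq <|
    ((frequently_not_irrational_nhdsLT 0).and_eventually self_mem_nhdsWithin).mono ?_
  rintro t ⟨hrat, ht⟩
  rw [min_gamma_fL10_fU10_of_neg ht,
    gamma_zero_of_eq_self fU10_zero ht.ne (fU10_of_neg_of_not_irrational ht hrat)]

theorem mapClusterPt_two_min_gamma_nhdsLT :
    MapClusterPt 2 (𝓝[<] 0) (fun t => min (gamma fL10 0 t) (gamma fU10 0 t)) := by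
  refine mapClusterPt_of_frequently_eq <|
    ((frequently_irrational_nhdsLT 0).and_eventually self_mem_nhdsWithin).mono ?_
  rintro t ⟨hirr, ht⟩
  rw [min_gamma_fL10_fU10_of_neg ht,
    gamma_zero_of_eq_mul fU10_zero ht.ne (fU10_of_neg_of_irrational ht hirr)]

theorem not_tendsto_min_gamma_nhdsLT (k : ℝ) :
    ¬ Tendsto (fun t => min (gamma fL10 0 t) (gamma fU10 0 t)) (𝓝[<] 0) (𝓝 k) := fun h => by
  have h1 := mapClusterPt_one_min_gamma_nhdsLT.eq_of_tendsto h
  have h2 := mapClusterPt_two_min_gamma_nhdsLT.eq_of_tendsto h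
  linarith

/-- Example: `fL ≤ fU` pointwise, the right-sided derivatives of `fL, fU` at `0` exist
(equal to `1, 2`), but `γL, γU` are not left complementary at `0` (for `t < 0` one has
`min(γL(t), γU(t)) = max(γL(t), γU(t))` and this common value has both `1` and `2` as
left cluster values), and `F = [fL, fU]` is NOT gH-differentiable at `0`. -/
theorem gH_not_differentiable_not_left_complementary_example :
    (∀ x, fL10 x ≤ fU10 x) ∧
    Tendsto (gamma fL10 0) (𝓝[>] (0 : ℝ)) (𝓝 1) ∧
    Tendsto (gamma fU10 0) (𝓝[>] (0 : ℝ)) (𝓝 2) ∧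
    (∀ t : ℝ, t < 0 → min (gamma fL10 0 t) (gamma fU10 0 t)
        = max (gamma fL10 0 t) (gamma fU10 0 t)) ∧
    MapClusterPt 1 (𝓝[<] (0 : ℝ)) (fun t => min (gamma fL10 0 t) (gamma fU10 0 t)) ∧
    MapClusterPt 2 (𝓝[<] (0 : ℝ)) (fun t => min (gamma fL10 0 t) (gamma fU10 0 t)) ∧
    (∀ kL kU : ℝ, ¬ LeftComplementary (gamma fL10 0) (gamma fU10 0) kL kU) ∧
    (¬ ∃ a b : ℝ, gHDifferentiableAt fL10 fU10 0 a b) := by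
  refine ⟨fL10_le_fU10, tendsto_gamma_fL10_nhdsGT, tendsto_gamma_fU10_nhdsGT,
    fun t ht => by rw [gamma_fL10_eq_gamma_fU10_of_neg ht, min_self, max_self],
    mapClusterPt_one_min_gamma_nhdsLT, mapClusterPt_two_min_gamma_nhdsLT, ?_, ?_⟩
  · rintro kL kU ⟨-, -, -, hmin, -⟩
    exact not_tendsto_min_gamma_nhdsLT kL hmin
  · rintro ⟨a, b, -, hmin, -⟩
    exact not_tendsto_min_gamma_nhdsLT a (hmin.mono_left (nhdsLT_le_nhdsNE 0))
end

section
/- Conditional additivity of the gH-product in the first argument: let ν, ω ∈ ℝⁿ and let K be an n-tuple of intervals with lower endpoints kᴸ and upper endpoints kᵁ (kᴸ ≤ kᵁ componentwise). If either (ν·kᴸ ≤ ν·kᵁ and ω·kᴸ ≤ ω·kᵁ) or (ν·kᴸ ≥ ν·kᵁ and ω·kᴸ ≥ ω·kᵁ), then ⟨ν + ω, K⟩_gH = ⟨ν, K⟩_gH + ⟨ω, K⟩_gH, where the sum on the right is interval addition. -/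
open Finset

/-- Euclidean dot product of two vectors in `ℝⁿ`. -/
def dotv {n : ℕ} (v w : Fin n → ℝ) : ℝ := ∑ i, v i * w i

/-- The gH-product of a vector `ν ∈ ℝⁿ` with an n-tuple of intervals given by its lower
endpoints `kL` and upper endpoints `kU`:
`⟨ν, K⟩_gH = [min(ν·kᴸ, ν·kᵁ), max(ν·kᴸ, ν·kᵁ)]`. -/
noncomputable def gHprod {n : ℕ} (v kL kU : Fin n → ℝ) : ℝ × ℝ :=
  (min (dotv v kL) (dotv v kU), max (dotv v kL) (dotv v kU))

lemma dotv_add {n : ℕ} (v w u : Fin n → ℝ) : dotv (v + w) u = dotv v u + dotv w u := by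
  simp only [dotv, Pi.add_apply, add_mul, sum_add_distrib]

section SameOrder

variable {α : Type*} [AddCommMonoid α] [LinearOrder α] [IsOrderedAddMonoid α] {a b c d : α}

lemma min_add_min_of_same_order (h : (a ≤ b ∧ c ≤ d) ∨ (b ≤ a ∧ d ≤ c)) :
    min (a + c) (b + d) = min a b + min c d := by
  rcases h with ⟨hab, hcd⟩ | ⟨hba, hdc⟩
  · rw [min_eq_left hab, min_eq_left hcd, min_eq_left (add_le_add hab hcd)]
  · rw [min_eq_right hba, min_eq_right hdc, min_eq_right (add_le_add hba hdc)]

lemma max_add_max_of_same_order (h : (a ≤ b ∧ c ≤ d) ∨ (b ≤ a ∧ d ≤ c)) :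
    max (a + c) (b + d) = max a b + max c d := by
  rcases h with ⟨hab, hcd⟩ | ⟨hba, hdc⟩
  · rw [max_eq_right hab, max_eq_right hcd, max_eq_right (add_le_add hab hcd)]
  · rw [max_eq_left hba, max_eq_left hdc, max_eq_left (add_le_add hba hdc)]

end SameOrder

theorem gHprod_add_of_same_order_general {n : ℕ} (ν ω kL kU : Fin n → ℝ)
    (hcase : (dotv ν kL ≤ dotv ν kU ∧ dotv ω kL ≤ dotv ω kU) ∨
             (dotv ν kU ≤ dotv ν kL ∧ dotv ω kU ≤ dotv ω kL)) :
    gHprod (ν + ω) kL kU = gHprod ν kL kU + gHprod ω kL kU := by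
  simp only [gHprod, dotv_add, Prod.mk_add_mk, min_add_min_of_same_order hcase,
    max_add_max_of_same_order hcase]

/-- Conditional additivity of the gH-product in the first argument: if
`ν·kᴸ ≤ ν·kᵁ` and `ω·kᴸ ≤ ω·kᵁ`, or `ν·kᴸ ≥ ν·kᵁ` and `ω·kᴸ ≥ ω·kᵁ`, then
`⟨ν + ω, K⟩_gH = ⟨ν, K⟩_gH + ⟨ω, K⟩_gH` (interval addition being componentwise). -/
theorem gHprod_add_of_same_order {n : ℕ} (ν ω kL kU : Fin n → ℝ) (h : ∀ i, kL i ≤ kU i)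
    (hcase : (dotv ν kL ≤ dotv ν kU ∧ dotv ω kL ≤ dotv ω kU) ∨
             (dotv ν kU ≤ dotv ν kL ∧ dotv ω kU ≤ dotv ω kL)) :
    gHprod (ν + ω) kL kU = gHprod ν kL kU + gHprod ω kL kU :=
  gHprod_add_of_same_order_general ν ω kL kU hcase
end
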